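/- For every real g with 0 ≤ g < 1/4, the series ∑_{n=0}^∞ C(2n+1, n+1)·g^{n+1} is summable with sum (1 − √(1−4g))/(2√(1−4g)). (This is the trace of the pure CDT transfer matrix: ∑_{s=1}^∞ C(2s−1, s)·g^s.) -/

import Mathlib

/-!
The central binomial coefficients have generating function `∑ C(2n, n) xⁿ = (1 - 4x)^(-1/2)`:
this is Newton's binomial series for exponent `-1/2`, because
`multichoose (1/2) n = (1/2)(3/2)⋯(n - 1/2) / n! = C(2n, n) / 4ⁿ`.
Since `C(2n+2, n+1) = 2 C(2n+1, n+1)`, the series of the theorem is half of that generating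
function with its constant term removed.
-/

open Polynomial

theorem ascPochhammer_eval_half_mul_four_pow (n : ℕ) :
    (ascPochhammer ℝ n).eval (1 / 2) * 4 ^ n = n.factorial * n.centralBinom := by
  induction n with
  | zero => simp
  | succ n ih =>
    have hrec : ((n : ℝ) + 1) * (n + 1).centralBinom = 2 * (2 * n + 1) * n.centralBinom := by
      exact_mod_cast Nat.succ_mul_centralBinom_succ n
    rw [ascPochhammer_succ_eval, Nat.factorial_succ]
    push_cast
    linear_combination (2 * (2 * n + 1) : ℝ) * ih - (n.factorial : ℝ) * hrec

theorem Ring.multichoose_half (n : ℕ) :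
    Ring.multichoose (1 / 2 : ℝ) n = n.centralBinom / 4 ^ n := by
  have hasc := Ring.factorial_nsmul_multichoose_eq_ascPochhammer (1 / 2 : ℝ) n
  rw [ascPochhammer_smeval_eq_eval, nsmul_eq_mul] at hasc
  have hfact : (n.factorial : ℝ) ≠ 0 := by positivity
  field_simp
  apply mul_left_cancel₀ hfact
  linear_combination 4 ^ n * hasc + ascPochhammer_eval_half_mul_four_pow n

theorem hasSum_centralBinom_mul_pow {x : ℝ} (hx : |x| < 1 / 4) :
    HasSum (fun n : ℕ => (n.centralBinom : ℝ) * x ^ n) (1 / Real.sqrt (1 - 4 * x)) := by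
  have h4x : 4 * x ∈ Metric.eball (0 : ℝ) 1 := by
    rw [Metric.mem_eball, edist_zero_right, ← ofReal_norm, ENNReal.ofReal_lt_one,
      Real.norm_eq_abs, abs_mul]
    norm_num
    linarith
  have h := (Real.one_div_one_sub_rpow_hasFPowerSeriesOnBall_zero (1 / 2)).hasSum h4x
  simp only [FormalMultilinearSeries.ofScalars_apply_eq, zero_add, ← Ring.multichoose_eq,
    Ring.multichoose_half, smul_eq_mul, ← Real.sqrt_eq_rpow] at h
  refine h.congr_fun fun n => ?_
  rw [mul_pow]
  field_simp

theorem Nat.centralBinom_succ_eq_two_mul_choose (n : ℕ) :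
    (n + 1).centralBinom = 2 * (2 * n + 1).choose (n + 1) := by
  rw [Nat.centralBinom_eq_two_mul_choose, show 2 * (n + 1) = 2 * n + 1 + 1 by ring,
    Nat.choose_succ_succ, Nat.choose_symm_half]
  ring

theorem stmt_13 (g : ℝ) (hg0 : 0 ≤ g) (hg1 : g < 1/4) :
    HasSum (fun n : ℕ => (Nat.choose (2 * n + 1) (n + 1) : ℝ) * g ^ (n + 1))
      ((1 - Real.sqrt (1 - 4 * g)) / (2 * Real.sqrt (1 - 4 * g))) := by
  have hg : |g| < 1 / 4 := abs_lt.mpr ⟨by linarith, hg1⟩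
  have hsqrt : 0 < Real.sqrt (1 - 4 * g) := Real.sqrt_pos.mpr (by linarith)
  have htail : HasSum (fun n : ℕ => ((n + 1).centralBinom : ℝ) * g ^ (n + 1))
      (1 / Real.sqrt (1 - 4 * g) - 1) := by
    simpa using (hasSum_nat_add_iff' 1).mpr (hasSum_centralBinom_mul_pow hg)
  have hvalue : (1 - Real.sqrt (1 - 4 * g)) / (2 * Real.sqrt (1 - 4 * g))
      = (1 / Real.sqrt (1 - 4 * g) - 1) / 2 := by
    field_simp
  rw [hvalue]
  refine (htail.div_const 2).congr_fun fun n => ?_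
  rw [Nat.centralBinom_succ_eq_two_mul_choose]
  push_cast
  ring
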